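/- For the Gaussian mechanism: if a query f on datasets has global ℓ₂-sensitivity Δ > 0, then the mechanism M(D) = f(D) + N(0, σ²Δ² I_d) satisfies (α, α/(2σ²))-RDP for every α > 1, since the Rényi divergence of order α between N(μ₁, σ²Δ² I) and N(μ₂, σ²Δ² I) with ‖μ₁ − μ₂‖₂ ≤ Δ is α‖μ₁−μ₂‖₂²/(2σ²Δ²) ≤ α/(2σ²). -/

import Mathlib

open MeasureTheory ProbabilityTheory
open scoped NNReal ENNReal

/-- Rényi divergence of order `α` between measures `P` and `Q`. -/
noncomputable def renyiDiv {Ω : Type*} [MeasurableSpace Ω] (α : ℝ)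
    (P Q : Measure Ω) : ℝ :=
  (α - 1)⁻¹ * Real.log (∫ x, (P.rnDeriv Q x).toReal ^ α ∂Q)

/-- The Gaussian mechanism: add independent `N(0, σ²Δ²)` noise to each
coordinate of the query output. -/
noncomputable def gaussianMechanism {Dset : Type*} {d : ℕ}
    (f : Dset → EuclideanSpace ℝ (Fin d)) (σ Δ : ℝ) (D : Dset) :
    Measure (Fin d → ℝ) :=
  Measure.pi (fun i => gaussianReal (f D i) (Real.toNNReal (σ ^ 2 * Δ ^ 2)))

/-!
Both mechanism outputs are products of one-dimensional Gaussians with the same variance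
`v = σ²Δ²`, so the Radon–Nikodym derivative of one with respect to the other is the product of
the coordinatewise density ratios, and the Rényi integral factorises over coordinates. In one
dimension, `p_b · (p_a / p_b) ^ α` is `exp (α (α - 1) (a - b)² / (2v))` times the Gaussian density
centred at `b + α (a - b)`, so each factor is that exponential. Summing the exponents gives
`D_α = α ‖f D - f D'‖² / (2σ²Δ²)`, and the sensitivity bound finishes the proof.
-/

section Pi

variable {ι : Type*} [Fintype ι] {Ω : ι → Type*}

lemma Set.indicator_univ_pi_prod {R : Type*} [CommMonoidWithZero R] (s : ∀ i, Set (Ω i))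
    (f : ∀ i, Ω i → R) :
    (Set.univ.pi s).indicator (fun x ↦ ∏ i, f i (x i)) =
      fun x ↦ ∏ i, (s i).indicator (f i) (x i) := by
  funext x
  by_cases hx : x ∈ Set.univ.pi s
  · simp_all [Set.indicator_of_mem]
  · obtain ⟨i, hi⟩ : ∃ i, x i ∉ s i := by simpa [Set.mem_pi] using hx
    rw [Set.indicator_of_notMem hx,
      Finset.prod_eq_zero (Finset.mem_univ i) (Set.indicator_of_notMem hi _)]

variable [∀ i, MeasurableSpace (Ω i)]

/-- The coordinates are independent under a product of probability measures. -/
lemma lintegral_fintype_prod_eq_prod {μ : ∀ i, Measure (Ω i)} [∀ i, IsProbabilityMeasure (μ i)]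
    {f : ∀ i, Ω i → ℝ≥0∞} (hf : ∀ i, Measurable (f i)) :
    ∫⁻ x, ∏ i, f i (x i) ∂Measure.pi μ = ∏ i, ∫⁻ y, f i y ∂μ i := by
  rw [lintegral_prod_eq_prod_lintegral_of_indepFun _ _
    (iIndepFun_pi fun i ↦ (hf i).aemeasurable) fun i ↦ (hf i).comp (measurable_pi_apply i)]
  exact Finset.prod_congr rfl fun i _ ↦ (measurePreserving_eval μ i).lintegral_comp (hf i)

lemma Measure.pi_withDensity {μ : ∀ i, Measure (Ω i)} [∀ i, IsProbabilityMeasure (μ i)]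
    {f : ∀ i, Ω i → ℝ≥0∞} (hf : ∀ i, Measurable (f i))
    [∀ i, SigmaFinite ((μ i).withDensity (f i))] :
    Measure.pi (fun i ↦ (μ i).withDensity (f i)) =
      (Measure.pi μ).withDensity (fun x ↦ ∏ i, f i (x i)) := by
  refine Measure.pi_eq fun s hs ↦ ?_
  rw [withDensity_apply _ (.univ_pi hs), ← lintegral_indicator (.univ_pi hs),
    Set.indicator_univ_pi_prod, lintegral_fintype_prod_eq_prod fun i ↦ (hf i).indicator (hs i)]
  exact Finset.prod_congr rfl fun i _ ↦ by
    rw [lintegral_indicator (hs i), withDensity_apply _ (hs i)]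

variable {μ ν : ∀ i, Measure (Ω i)} [∀ i, SigmaFinite (μ i)] [∀ i, IsProbabilityMeasure (ν i)]

lemma Measure.rnDeriv_pi (hμν : ∀ i, μ i ≪ ν i) :
    (Measure.pi μ).rnDeriv (Measure.pi ν) =ᵐ[Measure.pi ν]
      fun x ↦ ∏ i, (μ i).rnDeriv (ν i) (x i) := by
  have hμ : ∀ i, (ν i).withDensity ((μ i).rnDeriv (ν i)) = μ i := fun i ↦
    Measure.withDensity_rnDeriv_eq _ _ (hμν i)
  have : ∀ i, SigmaFinite ((ν i).withDensity ((μ i).rnDeriv (ν i))) := fun i ↦ by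
    rw [hμ i]; infer_instance
  have hmeas : ∀ i, Measurable ((μ i).rnDeriv (ν i)) := fun i ↦ Measure.measurable_rnDeriv _ _
  have hpi : Measure.pi μ = (Measure.pi ν).withDensity fun x ↦ ∏ i, (μ i).rnDeriv (ν i) (x i) := by
    rw [← Measure.pi_withDensity hmeas]
    simp only [hμ]
  rw [hpi]
  exact Measure.rnDeriv_withDensity _
    (Finset.measurable_prod _ fun i _ ↦ (hmeas i).comp (measurable_pi_apply i))

lemma integral_rnDeriv_pi_rpow (hμν : ∀ i, μ i ≪ ν i) (α : ℝ) :
    ∫ x, ((Measure.pi μ).rnDeriv (Measure.pi ν) x).toReal ^ α ∂Measure.pi ν =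
      ∏ i, ∫ y, ((μ i).rnDeriv (ν i) y).toReal ^ α ∂ν i := by
  rw [← integral_fintype_prod_eq_prod]
  refine integral_congr_ae ?_
  filter_upwards [Measure.rnDeriv_pi hμν] with x hx
  rw [hx, ENNReal.toReal_prod, Real.finsetProd_rpow _ _ fun i _ ↦ ENNReal.toReal_nonneg]

end Pi

section Gaussian

variable {v : ℝ≥0}

lemma gaussianPDFReal_mul_div_rpow (a b : ℝ) (hv : v ≠ 0) (α x : ℝ) :
    gaussianPDFReal b v x * (gaussianPDFReal a v x / gaussianPDFReal b v x) ^ α =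
      Real.exp (α * (α - 1) * (a - b) ^ 2 / (2 * v)) *
        gaussianPDFReal (b + α * (a - b)) v x := by
  have hv' : (0 : ℝ) < v := by positivity
  have hC : 0 < (√(2 * Real.pi * v))⁻¹ := by positivity
  simp only [gaussianPDFReal]
  rw [mul_div_mul_left _ _ hC.ne', ← Real.exp_sub, ← Real.exp_mul, mul_assoc, ← Real.exp_add,
    mul_left_comm, ← Real.exp_add]
  congr 2
  field_simp
  ring

lemma rnDeriv_gaussianReal_gaussianReal (a b : ℝ) (hv : v ≠ 0) :
    (gaussianReal a v).rnDeriv (gaussianReal b v) =ᵐ[gaussianReal b v]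
      fun x ↦ ENNReal.ofReal (gaussianPDFReal a v x / gaussianPDFReal b v x) := by
  have hb := gaussianReal_absolutelyContinuous b hv
  filter_upwards [Measure.rnDeriv_eq_div (gaussianReal_absolutelyContinuous a hv) hb,
    hb.ae_le (rnDeriv_gaussianReal a v), hb.ae_le (rnDeriv_gaussianReal b v)] with x h hp hq
  rw [h, hp, hq, gaussianPDF, gaussianPDF,
    ENNReal.ofReal_div_of_pos (gaussianPDFReal_pos b v x hv)]

lemma integral_rnDeriv_gaussianReal_rpow (a b : ℝ) (hv : v ≠ 0) (α : ℝ) :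
    ∫ x, ((gaussianReal a v).rnDeriv (gaussianReal b v) x).toReal ^ α ∂gaussianReal b v =
      Real.exp (α * (α - 1) * (a - b) ^ 2 / (2 * v)) := by
  calc _ = ∫ x, (gaussianPDFReal a v x / gaussianPDFReal b v x) ^ α ∂gaussianReal b v := by
        refine integral_congr_ae ?_
        filter_upwards [rnDeriv_gaussianReal_gaussianReal a b hv] with x hx
        rw [hx, ENNReal.toReal_ofReal
          (div_nonneg (gaussianPDFReal_nonneg _ _ _) (gaussianPDFReal_nonneg _ _ _))]
    _ = ∫ x, Real.exp (α * (α - 1) * (a - b) ^ 2 / (2 * v)) *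
          gaussianPDFReal (b + α * (a - b)) v x := by
        simp_rw [integral_gaussianReal_eq_integral_smul hv, smul_eq_mul,
          gaussianPDFReal_mul_div_rpow a b hv]
    _ = _ := by rw [integral_const_mul, integral_gaussianPDFReal_eq_one _ hv, mul_one]

lemma renyiDiv_pi_gaussianReal {ι : Type*} [Fintype ι] (a b : ι → ℝ) (hv : v ≠ 0) {α : ℝ}
    (hα : α ≠ 1) :
    renyiDiv α (Measure.pi fun i ↦ gaussianReal (a i) v)
        (Measure.pi fun i ↦ gaussianReal (b i) v) =
      α * (∑ i, (a i - b i) ^ 2) / (2 * v) := by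
  have hac : ∀ i, gaussianReal (a i) v ≪ gaussianReal (b i) v := fun i ↦
    (gaussianReal_absolutelyContinuous _ hv).trans (gaussianReal_absolutelyContinuous' _ hv)
  have hα' : α - 1 ≠ 0 := sub_ne_zero.mpr hα
  rw [renyiDiv, integral_rnDeriv_pi_rpow hac]
  simp_rw [integral_rnDeriv_gaussianReal_rpow _ _ hv, ← Real.exp_sum, Real.log_exp,
    ← Finset.sum_div, ← Finset.mul_sum]
  field_simp

end Gaussian

lemma renyiDiv_gaussianMechanism {Dset : Type*} {d : ℕ} (f : Dset → EuclideanSpace ℝ (Fin d))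
    {σ Δ : ℝ} (hσ : σ ≠ 0) (hΔ : Δ ≠ 0) {α : ℝ} (hα : α ≠ 1) (D D' : Dset) :
    renyiDiv α (gaussianMechanism f σ Δ D) (gaussianMechanism f σ Δ D') =
      α * ‖f D - f D'‖ ^ 2 / (2 * (σ ^ 2 * Δ ^ 2)) := by
  have hv : 0 < σ ^ 2 * Δ ^ 2 := by positivity
  rw [gaussianMechanism, gaussianMechanism,
    renyiDiv_pi_gaussianReal _ _ (Real.toNNReal_pos.mpr hv).ne' hα,
    Real.coe_toNNReal _ hv.le, EuclideanSpace.norm_sq_eq]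
  simp [Finset.sum_div, mul_div_assoc]

theorem gaussian_mechanism_rdp {Dset : Type*} {d : ℕ}
    (Neighbor : Dset → Dset → Prop)
    (f : Dset → EuclideanSpace ℝ (Fin d)) (σ Δ : ℝ) (hσ : 0 < σ) (hΔ : 0 < Δ)
    (hsens : ∀ D D', Neighbor D D' → ‖f D - f D'‖ ≤ Δ)
    (α : ℝ) (hα : 1 < α) :
    ∀ D D', Neighbor D D' →
      renyiDiv α (gaussianMechanism f σ Δ D) (gaussianMechanism f σ Δ D') ≤
        α / (2 * σ ^ 2) := by
  intro D D' hDD'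
  rw [renyiDiv_gaussianMechanism f hσ.ne' hΔ.ne' hα.ne']
  calc α * ‖f D - f D'‖ ^ 2 / (2 * (σ ^ 2 * Δ ^ 2))
      ≤ α * Δ ^ 2 / (2 * (σ ^ 2 * Δ ^ 2)) := by
        gcongr
        exact hsens D D' hDD'
    _ = α / (2 * σ ^ 2) := by field_simp
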